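/- If X is a basis of M whose weight w(X) strictly exceeds the minimum weight w* of a basis of M, then there exists an exchange pair (e, e') for X with w(e') < w(e), i.e., a strictly improving single-element exchange exists. -/

import Mathlib

open Set

variable {α : Type*}

/-- The total weight of a set of elements. -/
noncomputable def setWeight (w : α → ℝ) (X : Set α) : ℝ := ∑ᶠ e ∈ X, w e

/-- `(e, e')` is an exchange pair for a basis `X`: `e ∈ X`, `e' ∈ E \ X`, and
`X - e + e'` is again a basis. -/
def ExchangePair (M : Matroid α) (X : Set α) (e e' : α) : Prop :=
  e ∈ X ∧ e' ∈ M.E \ X ∧ M.IsBase (insert e' (X \ {e}))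

lemma setWeight_finset (w : α → ℝ) (s : Finset α) :
    setWeight w (s : Set α) = ∑ x ∈ s, w x :=
  finsum_mem_coe_finset w s

lemma setWeight_exchange (w : α → ℝ) {Y : Set α} (hY : Y.Finite) {e f : α}
    (he : e ∈ Y) (hf : f ∉ Y) :
    setWeight w (insert f (Y \ {e})) = setWeight w Y - w e + w f := by
  classical
  have h1 : (insert f (Y \ {e})) = ((insert f (hY.toFinset.erase e) : Finset α) : Set α) := by
    ext x
    simp only [Set.mem_insert_iff, Set.mem_diff, Set.mem_singleton_iff, Finset.coe_insert,
      Finset.coe_erase, Set.Finite.coe_toFinset]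
  have h2 : Y = ((hY.toFinset : Finset α) : Set α) := by simp
  rw [h1, setWeight_finset, Finset.sum_insert (by simp [hf]),
    Finset.sum_erase_eq_sub (by simp [he])]
  rw [(congrArg (setWeight w) h2).trans (setWeight_finset w _)]
  ring

/-- If `X` is a basis whose weight strictly exceeds the minimum weight `w*` of a
basis of `M`, then there is a strictly improving single-element exchange: an exchange
pair `(e, e')` for `X` with `w(e') < w(e)`. -/
theorem improving_exchange_exists (M : Matroid α) [M.Finite] (w : α → ℝ)
    (X : Set α) (hX : M.IsBase X)
    (hw : sInf {r : ℝ | ∃ Y, M.IsBase Y ∧ setWeight w Y = r} < setWeight w X) :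
    ∃ e e', ExchangePair M X e e' ∧ w e' < w e := by
  set S : Set ℝ := {r : ℝ | ∃ Y, M.IsBase Y ∧ setWeight w Y = r} with hS
  -- the set of bases is finite
  have hBfin : {Y : Set α | M.IsBase Y}.Finite := by
    apply M.ground_finite.finite_subsets.subset
    intro Y hY
    exact hY.subset_ground
  have hSfin : S.Finite := by
    have : S = setWeight w '' {Y : Set α | M.IsBase Y} := by
      ext r; simp [hS, eq_comm]
    rw [this]
    exact hBfin.image _
  have hSne : S.Nonempty := ⟨setWeight w X, X, hX, rfl⟩
  have hmem := hSne.csInf_mem hSfin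
  have hlb : ∀ Z : Set α, M.IsBase Z → sInf S ≤ setWeight w Z := by
    intro Z hZ
    exact csInf_le hSfin.bddBelow ⟨Z, hZ, rfl⟩
  -- the set of minimum-weight bases
  set T : Set (Set α) := {Z | M.IsBase Z ∧ setWeight w Z = sInf S} with hT
  have hTfin : T.Finite := hBfin.subset (fun Z hZ => hZ.1)
  have hTne : T.Nonempty := by
    obtain ⟨Y0, hY0, hw0⟩ := hmem
    exact ⟨Y0, hY0, hw0⟩
  -- choose a min-weight basis maximizing |X ∩ Y|
  obtain ⟨Y, hYT, hYmax⟩ : ∃ Y ∈ T, ∀ Z ∈ T, (X ∩ Y).ncard ≤ (X ∩ Z).ncard → (X ∩ Y).ncard = (X ∩ Z).ncard := by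
    obtain ⟨Y, hY, h⟩ := Set.exists_max_image T (fun Z => (X ∩ Z).ncard) hTfin hTne
    exact ⟨Y, hY, fun Z hZ h' => le_antisymm h' (h Z hZ)⟩
  obtain ⟨hY, hYw⟩ := hYT
  have hYlt : setWeight w Y < setWeight w X := by rw [hYw]; exact hw
  have hYfin : Y.Finite := M.set_finite Y hY.subset_ground
  have hXfin : X.Finite := M.set_finite X hX.subset_ground
  -- X \ Y is nonempty
  have hdne : (X \ Y).Nonempty := by
    rw [Set.diff_nonempty]
    intro hsub
    rcases Set.eq_or_ssubset_of_subset hsub with rfl | hss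
    · exact absurd hYlt (lt_irrefl _)
    · exact hss.ne (hX.eq_of_subset_isBase hY hsub)
  -- pick e of max weight in X \ Y
  have hdfin : (X \ Y).Finite := hXfin.diff (t := Y)
  obtain ⟨e, heF, hemax⟩ := Finset.exists_max_image hdfin.toFinset w
    (by rwa [← Set.Finite.toFinset_nonempty hdfin] at hdne)
  rw [Set.Finite.mem_toFinset] at heF
  have hemax' : ∀ a ∈ X \ Y, w a ≤ w e := by
    intro a ha
    exact hemax a (by rwa [Set.Finite.mem_toFinset])
  -- exchange from X: get e'
  obtain ⟨e', he', hXe'⟩ := hX.exchange hY heF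
  -- exchange from Y at e': get f
  obtain ⟨f, hf, hYf⟩ := hY.exchange hX he'
  -- weight of the new basis Y' = insert f (Y \ {e'})
  have hwY' : setWeight w (insert f (Y \ {e'})) = setWeight w Y - w e' + w f :=
    setWeight_exchange w hYfin he'.1 hf.2
  have hle : sInf S ≤ setWeight w (insert f (Y \ {e'})) := hlb _ hYf
  -- strict: otherwise the new basis has larger intersection with X
  have hstrict : sInf S < setWeight w (insert f (Y \ {e'})) := by
    rcases lt_or_eq_of_le hle with h | h
    · exact h
    · exfalso
      have hY'T : insert f (Y \ {e'}) ∈ T := ⟨hYf, h.symm⟩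
      have hXY : X ∩ insert f (Y \ {e'}) = insert f (X ∩ Y) := by
        ext x
        simp only [Set.mem_inter_iff, Set.mem_insert_iff, Set.mem_diff, Set.mem_singleton_iff]
        constructor
        · rintro ⟨hx, rfl | ⟨hxy, hxe⟩⟩
          · exact Or.inl rfl
          · exact Or.inr ⟨hx, hxy⟩
        · rintro (rfl | ⟨hx, hxy⟩)
          · exact ⟨hf.1, Or.inl rfl⟩
          · refine ⟨hx, Or.inr ⟨hxy, ?_⟩⟩
            rintro rfl
            exact he'.2 hx
      have hfn : f ∉ X ∩ Y := fun h => hf.2 h.2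
      have hcard : (X ∩ insert f (Y \ {e'})).ncard = (X ∩ Y).ncard + 1 := by
        rw [hXY, Set.ncard_insert_of_notMem hfn (hXfin.inter_of_left _)]
      have := hYmax _ hY'T (by omega)
      omega
  -- conclude w e' < w f ≤ w e
  have h1 : w e' < w f := by
    rw [hwY', hYw] at hstrict
    linarith
  have h2 : w f ≤ w e := hemax' f hf
  refine ⟨e, e', ⟨heF.1, ⟨hY.subset_ground he'.1, he'.2⟩, hXe'⟩, lt_of_lt_of_le h1 h2⟩
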